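/- (Claim 3.8.) Fix a realization (A, R_A) in the support of the process, an index i ∈ {1, …, m}, and an element β ∈ U_i \ {a_i}. Conditioned on (A, R_A) and on the event that i ∈ P_B and b_i = β, the expected number (over the remaining randomness of B and over R_B) of elements x ∈ U_i such that (x, r) ∈ P_i(F(A, R_A)) for some r and the first bit of Query(G(F(A, R_A), B, R_B), x) equals 1, is at most m + 1. -/

import Mathlib

noncomputable section

namespace Retrieval

/-! ### Entropy on a finite sample space with the uniform distribution -/

/-- The probability of an event `s` under the uniform distribution on a finite type `Ω`. -/
def unifPr (Ω : Type*) [Fintype Ω] (s : Set Ω) : ℝ :=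
  (Nat.card s : ℝ) / (Fintype.card Ω : ℝ)

/-- The Shannon entropy (in bits) of a random variable `X` defined on a finite sample
space `Ω` carrying the uniform distribution. -/
def entropy {Ω : Type*} {α : Type*} [Fintype Ω] (X : Ω → α) : ℝ :=
  (∑ ω : Ω, -Real.logb 2 (unifPr Ω {ω' | X ω' = X ω})) / (Fintype.card Ω : ℝ)

/-- The conditional Shannon entropy `H(X | Y) = H(X, Y) − H(Y)` (in bits). -/
def condEntropy {Ω : Type*} {α β : Type*} [Fintype Ω] (X : Ω → α) (Y : Ω → β) : ℝ :=
  entropy (fun ω => (X ω, Y ω)) - entropy Y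

/-- The first bit of a `v`-bit string. -/
def firstBit {v : ℕ} (r : Fin v → Bool) : Bool :=
  if h : 0 < v then r ⟨0, h⟩ else false

/-! ### The incremental random process

Parameters `n v u`.  The universe `[u]` is split into `m = n − n/v` consecutive parts,
each of size `u/m`.  An element of the `i`-th part is identified by its position
`a ∈ Fin (u/m)` inside the part; as a natural number it is the key `i·(u/m) + a`. -/

variable (n v u : ℕ)

/-- `m = n − n/v`, the number of parts of the universe. -/
def M : ℕ := n - n / v

/-- `u/m`, the size of each part of the universe. -/
def W : ℕ := u / M n v

/-- The key (element of `[u]`, 0-indexed) at position `a` of part `i`. -/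
def key (i : Fin (M n v)) (a : Fin (W n v u)) : ℕ := (i : ℕ) * W n v u + (a : ℕ)

/-- The model hypotheses on the parameters: `2 ≤ v ≤ log₂ n`, `v ∣ n`,
`m = n − n/v` divides `u`, and `u ≥ n³`. -/
def Hyp : Prop :=
  2 ≤ v ∧ (v : ℝ) ≤ Real.logb 2 n ∧ v ∣ n ∧ M n v ∣ u ∧ n ^ 3 ≤ u

/-- Raw data of a realization of the incremental random process:
`((A, R_A), (P_B, B, R_B))`.  `A i` is the (position of the) element of `A` in part `i`
and `R_A i` its `v`-bit value; `P_B` is the set of parts from which `B` samples, `B i` the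
element of `B` in part `i` (for `i ∈ P_B`; it is a canonical junk value `0` otherwise) and
`R_B i` its value (a canonical junk value otherwise). -/
abbrev IncData : Type :=
  ((Fin (M n v) → Fin (W n v u)) × (Fin (M n v) → Fin v → Bool)) ×
    (Finset (Fin (M n v)) × (Fin (M n v) → Fin (W n v u)) × (Fin (M n v) → Fin v → Bool))

/-- Validity of a realization of `(A, R_A)`: every value has first bit `0`
(the set `A` itself is unconstrained). -/
def ValidAR (_A : Fin (M n v) → Fin (W n v u)) (RA : Fin (M n v) → Fin v → Bool) : Prop :=
  ∀ j, firstBit (RA j) = false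

/-- Validity of a realization `(P_B, B)` given `A`: `|P_B| = n/v`, for `i ∈ P_B` the
element `B i` avoids `A i`, and outside `P_B` the function `B` takes a canonical junk
value (so that `(P_B, B)` carries exactly the information of the indexed family
`(b_i)_{i ∈ P_B}`). -/
def ValidB (A : Fin (M n v) → Fin (W n v u)) (P : Finset (Fin (M n v)))
    (B : Fin (M n v) → Fin (W n v u)) : Prop :=
  P.card = n / v ∧ (∀ j ∈ P, B j ≠ A j) ∧ ∀ j ∉ P, (B j : ℕ) = 0

/-- Validity of a realization of `R_B` given `P_B`: for `i ∈ P_B` the value has first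
bit `1`; outside `P_B` it is a canonical junk value. -/
def ValidRB (P : Finset (Fin (M n v))) (RB : Fin (M n v) → Fin v → Bool) : Prop :=
  (∀ j ∈ P, firstBit (RB j) = true) ∧ ∀ j ∉ P, RB j = fun _ => false

/-- Validity of a full realization of the incremental process. -/
def IncValid (d : IncData n v u) : Prop :=
  ValidAR n v u d.1.1 d.1.2 ∧ ValidB n v u d.1.1 d.2.1 d.2.2.1 ∧ ValidRB n v d.2.1 d.2.2.2

/-- The sample space of the incremental random process: since every random choice in the
process is uniform (subject to the stated constraints, whose number of options does not
depend on the previous choices), the joint distribution of `(A, R_A, P_B, B, R_B)` is the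
uniform distribution on the set of valid realizations. -/
abbrev IncOmega : Type := {d : IncData n v u // IncValid n v u d}

noncomputable instance : Fintype (IncOmega n v u) := Fintype.ofFinite _

/-- The type of the (deterministic) map `F`, building a bit string from a realization of
`(A, R_A)`. -/
abbrev FBuilder : Type :=
  (Fin (M n v) → Fin (W n v u)) → (Fin (M n v) → Fin v → Bool) → List Bool

/-- The type of the (deterministic) map `G`, building a bit string from a bit string
together with a realization of `(B, R_B)` (given as `(P_B, B, R_B)`). -/
abbrev GBuilder : Type :=
  List Bool → Finset (Fin (M n v)) → (Fin (M n v) → Fin (W n v u)) →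
    (Fin (M n v) → Fin v → Bool) → List Bool

/-- The type of the (deterministic) query map: a bit string and a key give a `v`-bit
value. -/
abbrev QueryFn (v : ℕ) : Type := List Bool → ℕ → Fin v → Bool

/-- The random bit string `F = F(A, R_A)`. -/
def Frv (F : FBuilder n v u) (ω : IncOmega n v u) : List Bool := F ω.1.1.1 ω.1.1.2

/-- The random bit string `G = G(F(A, R_A), B, R_B)`. -/
def Grv (F : FBuilder n v u) (G : GBuilder n v u) (ω : IncOmega n v u) : List Bool :=
  G (Frv n v u F ω) ω.1.2.1 ω.1.2.2.1 ω.1.2.2.2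

/-- The random variable `B` (together with the set of parts `P_B` it samples from). -/
def Brv (ω : IncOmega n v u) : Finset (Fin (M n v)) × (Fin (M n v) → Fin (W n v u)) :=
  (ω.1.2.1, ω.1.2.2.1)

/-- The random variable `(B, R_B)`. -/
def BRrv (ω : IncOmega n v u) :
    Finset (Fin (M n v)) × (Fin (M n v) → Fin (W n v u)) × (Fin (M n v) → Fin v → Bool) :=
  ω.1.2

/-- Correctness of an incremental retrieval scheme `(F, G, Query)`: on every realization
in the support of the process, querying `F(A,R_A)` with a key of `A` returns its value,
and querying `G(F(A,R_A),B,R_B)` with a key of `A` or of `B` returns its value. -/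
def Correct (F : FBuilder n v u) (G : GBuilder n v u) (Q : QueryFn v) : Prop :=
  ∀ ω : IncOmega n v u,
    (∀ i, Q (Frv n v u F ω) (key n v u i (ω.1.1.1 i)) = ω.1.1.2 i) ∧
    (∀ i, Q (Grv n v u F G ω) (key n v u i (ω.1.1.1 i)) = ω.1.1.2 i) ∧
    (∀ i ∈ ω.1.2.1, Q (Grv n v u F G ω) (key n v u i (ω.1.2.2.1 i)) = ω.1.2.2.2 i)

/-- The plausible set `P_i(f)`: all pairs `(x, r)` of an element `x` of part `i` and a
`v`-bit value `r` with first bit `0` such that some realization `(A', R'_{A'})` in the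
support of `(A, R_A)` has `F(A', R'_{A'}) = f`, `x` the element of `A'` in part `i`, and
`r` its value. -/
def Plausible (F : FBuilder n v u) (f : List Bool) (i : Fin (M n v)) :
    Set (Fin (W n v u) × (Fin v → Bool)) :=
  {p | ∃ A' RA', ValidAR n v u A' RA' ∧ F A' RA' = f ∧ A' i = p.1 ∧ RA' i = p.2}

/-- A pair `(x, r) ∈ P_i(f)` *remains feasible after `B`* (given as `(P_B, B)`) if the
witness `(A', R'_{A'})` can additionally be chosen with `A' ∩ B = ∅`. -/
def Feasible (F : FBuilder n v u) (f : List Bool) (i : Fin (M n v))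
    (P : Finset (Fin (M n v))) (B : Fin (M n v) → Fin (W n v u))
    (p : Fin (W n v u) × (Fin v → Bool)) : Prop :=
  ∃ A' RA', ValidAR n v u A' RA' ∧ F A' RA' = f ∧ A' i = p.1 ∧ RA' i = p.2 ∧
    ∀ j ∈ P, B j ≠ A' j

end Retrieval

/-! For `x ∈ P_i(F(A, R_A))` fix a witness `A'_x` with `F(A'_x, R'_x) = F(A, R_A)` whose element
in part `i` is `x`. If `B` avoids `A'_x`, correctness of `G` on `(A'_x, B)` makes the query at `x`
return a value with first bit `0`. So a first bit `1` at `x` needs `x = β` or `b_j = (A'_x)_j`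
for some other `j ∈ P_B`. Given `j ∈ P_B`, `b_j` is uniform on the `u/m − 1` values other than
`a_j`, so each of the `u/m` candidates `x` is hit with probability at most `1/(u/m − 1)`; summing over the
`n/v − 1` parts `j ≠ i` of `P_B` bounds the expectation by
`1 + (n/v − 1)·(u/m)/(u/m − 1) ≤ 1 + n/v ≤ 1 + m`. -/

namespace Retrieval

open Finset Function

abbrev BRData (n v u : ℕ) : Type :=
  Finset (Fin (M n v)) × (Fin (M n v) → Fin (W n v u)) × (Fin (M n v) → Fin v → Bool)

open Classical in
def condSupport {n v u : ℕ} (A : Fin (M n v) → Fin (W n v u)) (i : Fin (M n v))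
    (β : Fin (W n v u)) : Finset (BRData n v u) :=
  {q | ValidB n v u A q.1 q.2.1 ∧ ValidRB n v q.1 q.2.2 ∧ i ∈ q.1 ∧ q.2.1 i = β}

open Classical in
def answers {n v u : ℕ} (F : FBuilder n v u) (G : GBuilder n v u) (Q : QueryFn v)
    (f : List Bool) (i : Fin (M n v)) (q : BRData n v u) : Finset (Fin (W n v u)) :=
  {x | (∃ r, (x, r) ∈ Plausible n v u F f i) ∧
    firstBit (Q (G f q.1 q.2.1 q.2.2) (key n v u i x)) = true}

section

variable {n v u : ℕ}

open Classical

theorem Hyp.div_le_M (h : Hyp n v u) : n / v ≤ M n v := by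
  have : n / v ≤ n / 2 := Nat.div_le_div_left h.1 two_pos
  unfold M
  omega

theorem Hyp.div_le_W (h : Hyp n v u) : n / v ≤ W n v u := by
  obtain ⟨-, -, -, hMu, hu⟩ := h
  rcases Nat.eq_zero_or_pos n with rfl | hn
  · simp
  have hMW : M n v * W n v u = u := Nat.mul_div_cancel' hMu
  have hMn : M n v ≤ n := Nat.sub_le n (n / v)
  have : n * n ≤ n * W n v u := by nlinarith [Nat.mul_le_mul_right (W n v u) hMn]
  exact (Nat.div_le_self n v).trans (Nat.le_of_mul_le_mul_left this hn)

theorem firstBit_query_eq_false {F : FBuilder n v u} {G : GBuilder n v u} {Q : QueryFn v}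
    (hcor : Correct n v u F G Q) {A RA P B RB} (hA : ValidAR n v u A RA)
    (hB : ValidB n v u A P B) (hRB : ValidRB n v P RB) (i : Fin (M n v)) :
    firstBit (Q (G (F A RA) P B RB) (key n v u i (A i))) = false := by
  have := (hcor ⟨((A, RA), (P, B, RB)), hA, hB, hRB⟩).2.1 i
  simp only [Grv, Frv] at this
  rw [this, hA i]

variable {A : Fin (M n v) → Fin (W n v u)} {i j : Fin (M n v)} {β : Fin (W n v u)}

theorem mem_condSupport {q : BRData n v u} :
    q ∈ condSupport A i β ↔
      ValidB n v u A q.1 q.2.1 ∧ ValidRB n v q.1 q.2.2 ∧ i ∈ q.1 ∧ q.2.1 i = β := by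
  simp [condSupport]

variable (A i β) in
theorem exists_answers_subset_insert_collisions {F : FBuilder n v u} {G : GBuilder n v u}
    {Q : QueryFn v} (hcor : Correct n v u F G Q) (f : List Bool) :
    ∃ Aw : Fin (W n v u) → Fin (M n v) → Fin (W n v u), ∀ q ∈ condSupport A i β,
      answers F G Q f i q ⊆
        insert β ((univ.erase i).biUnion fun j => {x | j ∈ q.1 ∧ q.2.1 j = Aw x j}) := by
  have hwit : ∀ x : Fin (W n v u), (∃ r, (x, r) ∈ Plausible n v u F f i) →
      ∃ A' RA', ValidAR n v u A' RA' ∧ F A' RA' = f ∧ A' i = x := by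
    rintro x ⟨r, A', RA', hA', hF, hx, -⟩
    exact ⟨A', RA', hA', hF, hx⟩
  choose! Aw RAw hAw hFw hiw using hwit
  refine ⟨Aw, fun q hq x hx => ?_⟩
  obtain ⟨⟨hcard, -, hjunk⟩, hRB, hi, hβ⟩ := mem_condSupport.1 hq
  obtain ⟨hpl, hbit⟩ := (mem_filter.1 hx).2
  by_contra hnot
  simp only [mem_insert, mem_biUnion, mem_erase, mem_filter, mem_univ, true_and, ne_eq,
    and_true, not_or, not_exists, not_and] at hnot
  have hdisj : ∀ j ∈ q.1, q.2.1 j ≠ Aw x j := by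
    intro j hj
    by_cases hji : j = i
    · subst hji; rw [hβ, hiw x hpl]; exact fun h => hnot.1 h.symm
    · exact hnot.2 j hji hj
  have := firstBit_query_eq_false hcor (hAw x hpl) ⟨hcard, hdisj, hjunk⟩ hRB i
  rw [hFw x hpl, hiw x hpl, hbit] at this
  exact Bool.noConfusion this

theorem card_fiber_le_card_fiber (hji : j ≠ i) (c : Fin (W n v u)) {c' : Fin (W n v u)}
    (hc' : c' ≠ A j) :
    #{q ∈ condSupport A i β | j ∈ q.1 ∧ q.2.1 j = c} ≤
      #{q ∈ condSupport A i β | j ∈ q.1 ∧ q.2.1 j = c'} := by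
  refine card_le_card_of_injOn (fun q => (q.1, update q.2.1 j c', q.2.2)) ?_ ?_
  · intro q hq
    simp only [coe_filter, Set.mem_ofPred_eq, mem_condSupport] at hq ⊢
    obtain ⟨⟨⟨hcard, hne, hjunk⟩, hRB, hi, hβ⟩, hj, -⟩ := hq
    refine ⟨⟨⟨hcard, fun l hl => ?_, fun l hl => ?_⟩, hRB, hi, ?_⟩, hj, update_self ..⟩
    · rcases eq_or_ne l j with rfl | hlj
      · simpa using hc'
      · simpa [hlj] using hne l hl
    · simpa [show l ≠ j from fun h => hl (h ▸ hj)] using hjunk l hl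
    · simpa [hji.symm] using hβ
  · intro q hq q' hq' he
    simp only [coe_filter, Set.mem_ofPred_eq] at hq hq'
    simp only [Prod.mk.injEq] at he
    obtain ⟨h1, hupd, h3⟩ := he
    have h2 : q.2.1 = q'.2.1 := calc
      q.2.1 = update (update q.2.1 j c') j c := by rw [update_idem, ← hq.2.2, update_eq_self]
      _ = update (update q'.2.1 j c') j c := by rw [hupd]
      _ = q'.2.1 := by rw [update_idem, ← hq'.2.2, update_eq_self]
    exact Prod.ext h1 (Prod.ext h2 h3)

theorem sub_one_mul_card_fiber_le (hji : j ≠ i) (c : Fin (W n v u)) :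
    (W n v u - 1) * #{q ∈ condSupport A i β | j ∈ q.1 ∧ q.2.1 j = c} ≤
      #{q ∈ condSupport A i β | j ∈ q.1} := by
  have hmaps : Set.MapsTo (fun q : BRData n v u => q.2.1 j)
      ↑({q ∈ condSupport A i β | j ∈ q.1} : Finset _) ↑(univ.erase (A j)) := by
    intro q hq
    simp only [coe_filter, Set.mem_ofPred_eq, mem_condSupport] at hq
    simpa using hq.1.1.2.1 j hq.2
  calc (W n v u - 1) * #{q ∈ condSupport A i β | j ∈ q.1 ∧ q.2.1 j = c}
      = ∑ _c' ∈ univ.erase (A j), #{q ∈ condSupport A i β | j ∈ q.1 ∧ q.2.1 j = c} := by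
        simp [card_erase_of_mem]
    _ ≤ ∑ c' ∈ univ.erase (A j), #{q ∈ condSupport A i β | j ∈ q.1 ∧ q.2.1 j = c'} :=
        sum_le_sum fun c' hc' => card_fiber_le_card_fiber hji c (ne_of_mem_erase hc')
    _ = #{q ∈ condSupport A i β | j ∈ q.1} := by
        rw [card_eq_sum_card_fiberwise hmaps]
        simp only [filter_filter]

theorem sum_card_filter_mem_eq :
    ∑ j ∈ univ.erase i, #{q ∈ condSupport A i β | j ∈ q.1} =
      #(condSupport A i β) * (n / v - 1) := by
  simp only [card_filter]
  rw [sum_comm, ← smul_eq_mul, ← sum_const]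
  refine sum_congr rfl fun q hq => ?_
  obtain ⟨⟨hcard, -⟩, -, hi, -⟩ := mem_condSupport.1 hq
  rw [← card_filter, ← hcard, ← card_erase_of_mem hi]
  congr 1
  ext l
  simp [and_comm]

theorem sum_card_collisions_le (hW : 1 < W n v u) (hkW : n / v ≤ W n v u)
    (Aw : Fin (W n v u) → Fin (M n v) → Fin (W n v u)) :
    ∑ j ∈ univ.erase i, ∑ x, #{q ∈ condSupport A i β | j ∈ q.1 ∧ q.2.1 j = Aw x j} ≤
      n / v * #(condSupport A i β) := by
  set S := condSupport A i β
  have hWk : W n v u * (n / v - 1) ≤ (W n v u - 1) * (n / v) := by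
    rw [Nat.mul_sub_one, Nat.sub_one_mul]
    exact Nat.sub_le_sub_left hkW _
  refine Nat.le_of_mul_le_mul_left ?_ (Nat.sub_pos_of_lt hW)
  calc (W n v u - 1) * ∑ j ∈ univ.erase i, ∑ x, #{q ∈ S | j ∈ q.1 ∧ q.2.1 j = Aw x j}
      = ∑ j ∈ univ.erase i, ∑ x, (W n v u - 1) * #{q ∈ S | j ∈ q.1 ∧ q.2.1 j = Aw x j} := by
        simp only [mul_sum]
    _ ≤ ∑ j ∈ univ.erase i, ∑ _x : Fin (W n v u), #{q ∈ S | j ∈ q.1} :=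
        sum_le_sum fun j hj => sum_le_sum fun x _ =>
          sub_one_mul_card_fiber_le (ne_of_mem_erase hj) _
    _ = #S * (W n v u * (n / v - 1)) := by
        simp only [sum_const, card_univ, Fintype.card_fin, smul_eq_mul, ← mul_sum,
          sum_card_filter_mem_eq, S]
        ring
    _ ≤ #S * ((W n v u - 1) * (n / v)) := Nat.mul_le_mul_left _ hWk
    _ = (W n v u - 1) * (n / v * #S) := by ring

theorem sum_card_answers_le {F : FBuilder n v u} {G : GBuilder n v u} {Q : QueryFn v}
    (hcor : Correct n v u F G Q) (hkM : n / v ≤ M n v) (hkW : n / v ≤ W n v u)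
    (hW : 1 < W n v u) (f : List Bool) :
    ∑ q ∈ condSupport A i β, #(answers F G Q f i q) ≤ #(condSupport A i β) * (M n v + 1) := by
  obtain ⟨Aw, hAw⟩ := exists_answers_subset_insert_collisions A i β hcor f
  calc ∑ q ∈ condSupport A i β, #(answers F G Q f i q)
      ≤ ∑ q ∈ condSupport A i β,
          (∑ j ∈ univ.erase i, #{x | j ∈ q.1 ∧ q.2.1 j = Aw x j} + 1) := by
        refine sum_le_sum fun q hq => (card_le_card (hAw q hq)).trans ?_
        exact (card_insert_le _ _).trans (Nat.add_le_add_right card_biUnion_le _)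
    _ = ∑ j ∈ univ.erase i, ∑ x, #{q ∈ condSupport A i β | j ∈ q.1 ∧ q.2.1 j = Aw x j} +
          #(condSupport A i β) := by
        simp only [sum_add_distrib, sum_const, smul_eq_mul, mul_one, card_filter]
        rw [sum_comm]
        congr 1
        exact sum_congr rfl fun _ _ => sum_comm
    _ ≤ n / v * #(condSupport A i β) + #(condSupport A i β) :=
        Nat.add_le_add_right (sum_card_collisions_le hW hkW Aw) _
    _ ≤ #(condSupport A i β) * (M n v + 1) := by nlinarith

end

/-- Conditioned on `(A, R_A)`, the triple `(P_B, B, R_B)` is uniform over its valid realizations,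
so the conditional expectation is the average of the counts over the valid realizations with
`i ∈ P_B` and `b_i = β`. -/
theorem expected_B_answers :
    ∀ n v u : ℕ, Hyp n v u →
    ∀ (F : FBuilder n v u) (G : GBuilder n v u) (Q : QueryFn v),
      Correct n v u F G Q →
    ∀ (A : Fin (M n v) → Fin (W n v u)) (RA : Fin (M n v) → Fin v → Bool),
      ValidAR n v u A RA →
    ∀ (i : Fin (M n v)) (β : Fin (W n v u)), β ≠ A i →
      (∑ q : Finset (Fin (M n v)) × (Fin (M n v) → Fin (W n v u)) ×
          (Fin (M n v) → Fin v → Bool),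
          Set.indicator {q | ValidB n v u A q.1 q.2.1 ∧ ValidRB n v q.1 q.2.2 ∧
              i ∈ q.1 ∧ q.2.1 i = β}
            (fun q => (Nat.card {x : Fin (W n v u) |
                (∃ r, (x, r) ∈ Plausible n v u F (F A RA) i) ∧
                  firstBit (Q (G (F A RA) q.1 q.2.1 q.2.2) (key n v u i x)) = true} : ℝ))
            q) /
        (Nat.card {q : Finset (Fin (M n v)) × (Fin (M n v) → Fin (W n v u)) ×
            (Fin (M n v) → Fin v → Bool) //
          ValidB n v u A q.1 q.2.1 ∧ ValidRB n v q.1 q.2.2 ∧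
            i ∈ q.1 ∧ q.2.1 i = β} : ℝ) ≤ (M n v : ℝ) + 1 := by
  intro n v u hyp F G Q hcor A RA _ i β hβ
  classical
  have hW : 1 < W n v u := by simpa using Fintype.one_lt_card_iff.2 ⟨β, A i, hβ⟩
  have hbound := sum_card_answers_le (A := A) (i := i) (β := β) hcor hyp.div_le_M
    hyp.div_le_W hW (F A RA)
  calc _ = (∑ q ∈ condSupport A i β, (#(answers F G Q (F A RA) i q) : ℝ)) /
          #(condSupport A i β) := by
        congr 1
        · simp [condSupport, answers, sum_filter, Set.indicator_apply, Nat.card_eq_fintype_card]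
        · simp [condSupport, Nat.card_eq_fintype_card, Fintype.card_subtype]
    _ ≤ (M n v : ℝ) + 1 := by
        refine div_le_of_le_mul₀ (by positivity) (by positivity) ?_
        rw [mul_comm]
        exact_mod_cast hbound

end Retrieval
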